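/- Let P be a 3×3 row-stochastic matrix with stationary probability row vector μ, and let Π be a 3×K state-dependent probability matrix of rank 2 with columns φ_k and Λ_k = diag(φ_k). Let φ be a column of Π such that every column of Π is a real linear combination of φ and e = (1,1,1)ᵀ, and set Λ = diag(φ). Then the observed process is reversible if and only if for every r ≥ 1 and all positive integers n_1, …, n_r, μ·Λ·P^{n_1}·Λ·P^{n_2}·Λ·⋯·Λ·P^{n_r}·Λ·e = μ·Λ·P^{n_r}·Λ·⋯·Λ·P^{n_2}·Λ·P^{n_1}·Λ·e. -/

import Mathlib

/-! `P̂ = D⁻¹ Pᵀ D` with `D = diag μ` is the time reversal of the chain: it turns the reversed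
product for `P` into the forward product for `P̂` without changing `μ · _ · e`. So reversibility
says that `P` and `P̂` give the same value on every word, and the single-symbol condition says
the same for words in `Λ` alone. As every `Λ_k` is `a Λ + b I`, expanding a word writes its value
as a linear combination, with coefficients not depending on the chain, of the single-symbol values
`μ Λ P^{g₁} Λ ⋯ P^{g_m} Λ e` with positive gaps: an identity factor merges the neighbouring powers
of `P`, and `μ P = μ`, `P e = e` absorb the powers at either end. -/

open Matrix

/-- The matrix product `Λ_{s₀} · P^{n₀} · Λ_{s₁} · ⋯ · P^{n_{r−1}} · Λ_{s_r}`
appearing in the finite-dimensional distributions of the observed process of a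
discrete-time hidden Markov model with 1-step transition probability matrix `P`
and state-dependent probability matrix `E`. -/
def obsProdD (P : Matrix (Fin 3) (Fin 3) ℝ) {K : ℕ}
    (E : Matrix (Fin 3) (Fin K) ℝ) {r : ℕ} (s : Fin (r + 1) → Fin K)
    (n : Fin r → ℕ) : Matrix (Fin 3) (Fin 3) ℝ :=
  Matrix.diagonal (fun a => E a (s 0)) *
    (List.ofFn fun i : Fin r =>
      P ^ n i * Matrix.diagonal fun a => E a (s i.succ)).prod

namespace Matrix

section Semiring

variable {ι R : Type*} [Fintype ι] [DecidableEq ι] [Semiring R]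

theorem pow_mulVec_eq_self {P : Matrix ι ι R} {v : ι → R} (h : P *ᵥ v = v) (m : ℕ) :
    P ^ m *ᵥ v = v := by
  induction m with
  | zero => simp
  | succ m ih => rw [pow_succ, ← mulVec_mulVec, h, ih]

theorem vecMul_pow_eq_self {P : Matrix ι ι R} {μ : ι → R} (h : μ ᵥ* P = μ) (m : ℕ) :
    μ ᵥ* P ^ m = μ := by
  induction m with
  | zero => simp
  | succ m ih => rw [pow_succ, ← vecMul_vecMul, ih, h]

theorem diagonal_mulVec_one (μ : ι → R) : diagonal μ *ᵥ 1 = μ :=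
  funext fun i => by simp [mulVec_diagonal]

theorem one_vecMul_diagonal (μ : ι → R) : 1 ᵥ* diagonal μ = μ :=
  funext fun i => by simp [vecMul_diagonal]

end Semiring

section Field

variable {ι 𝕜 : Type*} [Fintype ι] [DecidableEq ι] [Field 𝕜] {μ : ι → 𝕜}

theorem diagonal_mul_diagonal_inv (hμ : ∀ i, μ i ≠ 0) : diagonal μ * diagonal μ⁻¹ = 1 := by
  rw [diagonal_mul_diagonal, ← diagonal_one]
  exact congrArg diagonal (funext fun i => mul_inv_cancel₀ (hμ i))

theorem vecMul_diagonal_inv (hμ : ∀ i, μ i ≠ 0) : μ ᵥ* diagonal μ⁻¹ = 1 :=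
  funext fun i => by simp [vecMul_diagonal, hμ i]

theorem diagonal_inv_mulVec (hμ : ∀ i, μ i ≠ 0) : diagonal μ⁻¹ *ᵥ μ = 1 :=
  funext fun i => by simp [mulVec_diagonal, hμ i]

end Field

end Matrix

section Expansion

variable {ι R : Type*} [Fintype ι] [DecidableEq ι] [CommRing R]

def singleSymbolProd (P Λ : Matrix ι ι R) (g : List ℕ) : Matrix ι ι R :=
  Λ * (g.map fun m => P ^ m * Λ).prod

def interleavedProd (P : Matrix ι ι R) (l : List (ℕ × Matrix ι ι R)) : Matrix ι ι R :=
  (l.map fun x => P ^ x.1 * x.2).prod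

variable {P Q Λ : Matrix ι ι R} {μ : ι → R}

theorem singleSymbolProd_mul_pow_mul_interleavedProd_cons (g : List ℕ) (m n : ℕ) (a b : R)
    (l : List (ℕ × Matrix ι ι R)) :
    singleSymbolProd P Λ g * P ^ m * interleavedProd P ((n, a • Λ + b • 1) :: l) =
      a • (singleSymbolProd P Λ (g ++ [m + n]) * P ^ 0 * interleavedProd P l) +
        b • (singleSymbolProd P Λ g * P ^ (m + n) * interleavedProd P l) := by
  simp only [singleSymbolProd, interleavedProd, List.map_append, List.map_cons, List.map_nil,
    List.prod_append, List.prod_cons, List.prod_nil, pow_zero, pow_add, mul_one, add_mul, mul_add,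
    smul_mul_assoc, mul_smul_comm, Matrix.mul_assoc]

theorem vecMul_mul_pow_dotProduct_of_mulVec_eq_self {v : ι → R} (h : P *ᵥ v = v)
    (W : Matrix ι ι R) (m : ℕ) : μ ᵥ* (W * P ^ m) ⬝ᵥ v = μ ᵥ* W ⬝ᵥ v := by
  rw [← vecMul_vecMul, ← dotProduct_mulVec, pow_mulVec_eq_self h]

-- `P ^ m` is the power still waiting for its next `Λ`: taking `b • 1` from a factor adds the
-- factor's power to it.
theorem vecMul_singleSymbolProd_mul_interleavedProd_eq (hP : P *ᵥ 1 = 1) (hQ : Q *ᵥ 1 = 1)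
    (hsingle : ∀ g : List ℕ, (∀ m ∈ g, 1 ≤ m) →
      μ ᵥ* singleSymbolProd P Λ g ⬝ᵥ 1 = μ ᵥ* singleSymbolProd Q Λ g ⬝ᵥ 1)
    {l : List (ℕ × Matrix ι ι R)} (hl : ∀ x ∈ l, 1 ≤ x.1 ∧ x.2 ∈ Submodule.span R {Λ, 1})
    {g : List ℕ} (hg : ∀ m ∈ g, 1 ≤ m) (m : ℕ) :
    μ ᵥ* (singleSymbolProd P Λ g * P ^ m * interleavedProd P l) ⬝ᵥ 1 =
      μ ᵥ* (singleSymbolProd Q Λ g * Q ^ m * interleavedProd Q l) ⬝ᵥ 1 := by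
  induction l generalizing g m with
  | nil =>
    simp only [interleavedProd, List.map_nil, List.prod_nil, Matrix.mul_one,
      vecMul_mul_pow_dotProduct_of_mulVec_eq_self hP, vecMul_mul_pow_dotProduct_of_mulVec_eq_self hQ]
    exact hsingle g hg
  | cons x l ih =>
    obtain ⟨n, D⟩ := x
    rw [List.forall_mem_cons] at hl
    obtain ⟨⟨hn, hD⟩, hl⟩ := hl
    obtain ⟨a, b, rfl⟩ := Submodule.mem_span_pair.1 hD
    have hg' : ∀ k ∈ g ++ [m + n], 1 ≤ k :=
      List.forall_mem_append.2 ⟨hg, List.forall_mem_singleton.2 (by omega)⟩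
    simp only [singleSymbolProd_mul_pow_mul_interleavedProd_cons, vecMul_add, vecMul_smul,
      add_dotProduct, smul_dotProduct, ih hl hg', ih hl hg]

theorem vecMul_interleavedProd_cons (hμP : μ ᵥ* P = μ) (n : ℕ) (D : Matrix ι ι R)
    (l : List (ℕ × Matrix ι ι R)) :
    μ ᵥ* interleavedProd P ((n, D) :: l) = μ ᵥ* (D * interleavedProd P l) := by
  rw [interleavedProd, List.map_cons, List.prod_cons, ← interleavedProd, Matrix.mul_assoc,
    ← vecMul_vecMul, vecMul_pow_eq_self hμP]

theorem vecMul_mul_interleavedProd_eq (hP : P *ᵥ 1 = 1) (hQ : Q *ᵥ 1 = 1)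
    (hμP : μ ᵥ* P = μ) (hμQ : μ ᵥ* Q = μ)
    (hsingle : ∀ g : List ℕ, (∀ m ∈ g, 1 ≤ m) →
      μ ᵥ* singleSymbolProd P Λ g ⬝ᵥ 1 = μ ᵥ* singleSymbolProd Q Λ g ⬝ᵥ 1)
    {D : Matrix ι ι R} (hD : D ∈ Submodule.span R {Λ, 1})
    {l : List (ℕ × Matrix ι ι R)} (hl : ∀ x ∈ l, 1 ≤ x.1 ∧ x.2 ∈ Submodule.span R {Λ, 1}) :
    μ ᵥ* (D * interleavedProd P l) ⬝ᵥ 1 = μ ᵥ* (D * interleavedProd Q l) ⬝ᵥ 1 := by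
  induction l generalizing D with
  | nil => rfl
  | cons x l ih =>
    obtain ⟨n, D'⟩ := x
    obtain ⟨a, b, rfl⟩ := Submodule.mem_span_pair.1 hD
    have hsplit : ∀ P : Matrix ι ι R, (a • Λ + b • 1) * interleavedProd P ((n, D') :: l) =
        a • (singleSymbolProd P Λ [] * P ^ 0 * interleavedProd P ((n, D') :: l)) +
          b • interleavedProd P ((n, D') :: l) := by
      intro P
      simp [singleSymbolProd, add_mul]
    have hl' := List.forall_mem_cons.1 hl
    simp only [hsplit, vecMul_add, vecMul_smul, add_dotProduct, smul_dotProduct,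
      vecMul_interleavedProd_cons hμP, vecMul_interleavedProd_cons hμQ, ih hl'.1.2 hl'.2,
      vecMul_singleSymbolProd_mul_interleavedProd_eq hP hQ hsingle hl (List.forall_mem_nil _)]

end Expansion

theorem List.ofFn_comp_rev {α : Type*} {n : ℕ} (f : Fin n → α) :
    List.ofFn (f ∘ Fin.rev) = (List.ofFn f).reverse := by
  rw [List.ofFn_eq_map, List.ofFn_eq_map, ← List.map_reverse, List.finRange_reverse, List.map_map]

theorem List.mul_prod_ofFn_mul_succ {M : Type*} [Monoid M] {r : ℕ} (a : Fin (r + 1) → M)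
    (b : Fin r → M) :
    a 0 * (List.ofFn fun i => b i * a i.succ).prod =
      (List.ofFn fun i => a i.castSucc * b i).prod * a (Fin.last r) := by
  induction r with
  | zero => simp
  | succ r ih =>
    have ih' := ih (fun j => a j.succ) (fun i => b i.succ)
    simp only [Fin.succ_last] at ih'
    simp only [List.ofFn_succ, List.prod_cons, Fin.castSucc_zero, mul_assoc, ih',
      Fin.succ_castSucc]

section TimeReversal

variable {ι 𝕜 : Type*} [Fintype ι] [DecidableEq ι] [Field 𝕜] {μ : ι → 𝕜}

noncomputable def timeReversal (μ : ι → 𝕜) (M : Matrix ι ι 𝕜) : Matrix ι ι 𝕜 :=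
  diagonal μ⁻¹ * Mᵀ * diagonal μ

theorem timeReversal_mul (hμ : ∀ i, μ i ≠ 0) (A B : Matrix ι ι 𝕜) :
    timeReversal μ (A * B) = timeReversal μ B * timeReversal μ A := by
  simp only [timeReversal, transpose_mul, Matrix.mul_assoc]
  rw [← Matrix.mul_assoc (diagonal μ), diagonal_mul_diagonal_inv hμ, Matrix.one_mul]

theorem timeReversal_diagonal (hμ : ∀ i, μ i ≠ 0) (d : ι → 𝕜) :
    timeReversal μ (diagonal d) = diagonal d := by
  rw [timeReversal, diagonal_transpose, diagonal_mul_diagonal, diagonal_mul_diagonal]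
  exact congrArg diagonal (funext fun i => by
    rw [Pi.inv_apply, mul_right_comm, inv_mul_cancel₀ (hμ i), one_mul])

theorem timeReversal_one (hμ : ∀ i, μ i ≠ 0) : timeReversal μ (1 : Matrix ι ι 𝕜) = 1 := by
  rw [← diagonal_one, timeReversal_diagonal hμ]

theorem timeReversal_pow (hμ : ∀ i, μ i ≠ 0) (M : Matrix ι ι 𝕜) (k : ℕ) :
    timeReversal μ (M ^ k) = timeReversal μ M ^ k := by
  induction k with
  | zero => exact timeReversal_one hμ
  | succ k ih => rw [pow_succ, timeReversal_mul hμ, ih, pow_succ']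

theorem timeReversal_list_prod (hμ : ∀ i, μ i ≠ 0) (l : List (Matrix ι ι 𝕜)) :
    timeReversal μ l.prod = (l.map (timeReversal μ)).reverse.prod := by
  induction l with
  | nil => exact timeReversal_one hμ
  | cons M l ih => simp [timeReversal_mul hμ, ih]

theorem vecMul_timeReversal_dotProduct_one (hμ : ∀ i, μ i ≠ 0) (M : Matrix ι ι 𝕜) :
    μ ᵥ* timeReversal μ M ⬝ᵥ 1 = μ ᵥ* M ⬝ᵥ 1 := by
  rw [timeReversal, ← vecMul_vecMul, ← vecMul_vecMul, vecMul_diagonal_inv hμ, vecMul_transpose,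
    ← dotProduct_mulVec, diagonal_mulVec_one μ, dotProduct_comm, dotProduct_mulVec]

theorem timeReversal_mulVec_one (hμ : ∀ i, μ i ≠ 0) {P : Matrix ι ι 𝕜} (hμP : μ ᵥ* P = μ) :
    timeReversal μ P *ᵥ 1 = 1 := by
  rw [timeReversal, ← mulVec_mulVec, ← mulVec_mulVec, diagonal_mulVec_one μ, mulVec_transpose, hμP,
    diagonal_inv_mulVec hμ]

theorem vecMul_timeReversal (hμ : ∀ i, μ i ≠ 0) {P : Matrix ι ι 𝕜} (hP : P *ᵥ 1 = 1) :
    μ ᵥ* timeReversal μ P = μ := by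
  rw [timeReversal, ← vecMul_vecMul, ← vecMul_vecMul, vecMul_diagonal_inv hμ, vecMul_transpose, hP,
    one_vecMul_diagonal μ]

theorem timeReversal_mul_prod_ofFn (hμ : ∀ i, μ i ≠ 0) {r : ℕ} (a : Fin (r + 1) → Matrix ι ι 𝕜)
    (b : Fin r → Matrix ι ι 𝕜) :
    timeReversal μ (a 0 * (List.ofFn fun i => b i * a i.succ).prod) =
      timeReversal μ (a (Fin.rev 0)) *
        (List.ofFn fun i => timeReversal μ (b i.rev) * timeReversal μ (a i.succ.rev)).prod := by
  rw [List.mul_prod_ofFn_mul_succ (fun j => timeReversal μ (a j.rev)), timeReversal_mul hμ,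
    timeReversal_list_prod hμ, List.map_ofFn, ← List.ofFn_comp_rev]
  simp [Function.comp_def, timeReversal_mul hμ, Fin.rev_castSucc]

end TimeReversal

theorem obsProdD_eq_mul_interleavedProd (P : Matrix (Fin 3) (Fin 3) ℝ) {K : ℕ}
    (E : Matrix (Fin 3) (Fin K) ℝ) {r : ℕ} (s : Fin (r + 1) → Fin K) (n : Fin r → ℕ) :
    obsProdD P E s n = diagonal (fun a => E a (s 0)) *
      interleavedProd P (List.ofFn fun i => (n i, diagonal fun a => E a (s i.succ))) := by
  rw [obsProdD, interleavedProd, List.map_ofFn]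
  rfl

theorem obsProdD_const_getElem (P : Matrix (Fin 3) (Fin 3) ℝ) {K : ℕ}
    (E : Matrix (Fin 3) (Fin K) ℝ) (k : Fin K) (g : List ℕ) :
    obsProdD P E (fun _ => k) (fun i : Fin g.length => g[(i : ℕ)]) =
      singleSymbolProd P (diagonal fun a => E a k) g := by
  rw [obsProdD, singleSymbolProd]
  exact congrArg _ (congrArg List.prod
    (List.ofFn_getElem_eq_map g fun m => P ^ m * diagonal fun a => E a k))

theorem vecMul_obsProdD_rev {μ : Fin 3 → ℝ} (hμ : ∀ i, μ i ≠ 0) (P : Matrix (Fin 3) (Fin 3) ℝ)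
    {K : ℕ} (E : Matrix (Fin 3) (Fin K) ℝ) {r : ℕ} (s : Fin (r + 1) → Fin K) (n : Fin r → ℕ) :
    μ ᵥ* obsProdD P E (s ∘ Fin.rev) (n ∘ Fin.rev) ⬝ᵥ 1 =
      μ ᵥ* obsProdD (timeReversal μ P) E s n ⬝ᵥ 1 := by
  rw [← vecMul_timeReversal_dotProduct_one hμ, obsProdD, timeReversal_mul_prod_ofFn hμ
    (fun j => diagonal fun a => E a ((s ∘ Fin.rev) j)) fun i => P ^ (n ∘ Fin.rev) i]
  simp [timeReversal_diagonal hμ, timeReversal_pow hμ, obsProdD]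

theorem reversible_iff_single_symbol_general
    (P : Matrix (Fin 3) (Fin 3) ℝ) (μ : Fin 3 → ℝ)
    {K : ℕ} (E : Matrix (Fin 3) (Fin K) ℝ) (φ : Fin 3 → ℝ)
    (hP1 : ∀ i : Fin 3, ∑ j, P i j = 1)
    (hpos : ∀ i, 0 < μ i)
    (hstat : μ ᵥ* P = μ)
    (hφ : ∃ k : Fin K, φ = fun a => E a k)
    (hcomb : ∀ k : Fin K, ∃ a b : ℝ,
      (fun i => E i k) = a • φ + b • (fun _ => (1 : ℝ))) :
    (∀ (r : ℕ) (s : Fin (r + 1) → Fin K) (n : Fin r → ℕ), (∀ i, 1 ≤ n i) →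
        (μ ᵥ* obsProdD P E s n) ⬝ᵥ (fun _ => (1 : ℝ)) =
          (μ ᵥ* obsProdD P E (s ∘ Fin.rev) (n ∘ Fin.rev)) ⬝ᵥ (fun _ => (1 : ℝ)))
      ↔ (∀ (r : ℕ), 1 ≤ r → ∀ n : Fin r → ℕ, (∀ i, 1 ≤ n i) →
          (μ ᵥ* (Matrix.diagonal φ *
              (List.ofFn fun i : Fin r => P ^ n i * Matrix.diagonal φ).prod))
            ⬝ᵥ (fun _ => (1 : ℝ)) =
          (μ ᵥ* (Matrix.diagonal φ *
              (List.ofFn fun i : Fin r =>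
                P ^ (n ∘ Fin.rev) i * Matrix.diagonal φ).prod))
            ⬝ᵥ (fun _ => (1 : ℝ))) := by
  have hμ : ∀ i, μ i ≠ 0 := fun i => (hpos i).ne'
  have hP : P *ᵥ 1 = 1 := funext fun i => by simpa [mulVec, dotProduct] using hP1 i
  obtain ⟨k, rfl⟩ := hφ
  simp only [← Pi.one_def]
  constructor
  · intro hrev r _ n hn
    exact hrev r (fun _ => k) n hn
  · intro hsym r s n hn
    have hsingle : ∀ g : List ℕ, (∀ m ∈ g, 1 ≤ m) →
        μ ᵥ* singleSymbolProd P (diagonal fun a => E a k) g ⬝ᵥ 1 =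
          μ ᵥ* singleSymbolProd (timeReversal μ P) (diagonal fun a => E a k) g ⬝ᵥ 1 := by
      intro g hg
      rcases eq_or_ne g [] with rfl | hne
      · rfl
      rw [← obsProdD_const_getElem, ← obsProdD_const_getElem, ← vecMul_obsProdD_rev hμ]
      exact hsym g.length (List.length_pos_iff.2 hne) _ fun i => hg _ (List.getElem_mem _)
    have hspan : ∀ j, diagonal (fun a => E a j) ∈
        Submodule.span ℝ {diagonal fun a => E a k, 1} := fun j => by
      obtain ⟨a, b, h⟩ := hcomb j
      exact Submodule.mem_span_pair.2
        ⟨a, b, by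
          rw [h]; simp [← diagonal_one, ← diagonal_smul, diagonal_add, Pi.add_def]⟩
    rw [vecMul_obsProdD_rev hμ, obsProdD_eq_mul_interleavedProd, obsProdD_eq_mul_interleavedProd]
    exact vecMul_mul_interleavedProd_eq hP (timeReversal_mulVec_one hμ hstat) hstat
      (vecMul_timeReversal hμ hP) hsingle (hspan _)
      (by simpa [List.mem_ofFn] using fun i => ⟨hn i, hspan _⟩)

/-- If the rank of the state-dependent probability matrix is 2 and
`φ` is a column of it such that every column is a linear combination of `φ` and
`e = (1,1,1)ᵀ`, then, with `Λ = diag(φ)`, the observed process is reversible if and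
only if `μ·Λ·P^{n₁}·Λ·⋯·Λ·P^{n_r}·Λ·e = μ·Λ·P^{n_r}·Λ·⋯·Λ·P^{n₁}·Λ·e` for all `r ≥ 1`
and all positive integers `n₁, …, n_r`. -/
theorem reversible_iff_single_symbol
    (P : Matrix (Fin 3) (Fin 3) ℝ) (μ : Fin 3 → ℝ)
    {K : ℕ} (E : Matrix (Fin 3) (Fin K) ℝ) (φ : Fin 3 → ℝ)
    (hP0 : ∀ i j : Fin 3, 0 ≤ P i j)
    (hP1 : ∀ i : Fin 3, ∑ j, P i j = 1)
    (hpos : ∀ i, 0 < μ i) (hsum : μ 0 + μ 1 + μ 2 = 1)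
    (hstat : μ ᵥ* P = μ)
    (hE0 : ∀ a k, 0 ≤ E a k) (hE1 : ∀ a : Fin 3, ∑ k, E a k = 1)
    (hrank : E.rank = 2)
    (hφ : ∃ k : Fin K, φ = fun a => E a k)
    (hcomb : ∀ k : Fin K, ∃ a b : ℝ,
      (fun i => E i k) = a • φ + b • (fun _ => (1 : ℝ))) :
    (∀ (r : ℕ) (s : Fin (r + 1) → Fin K) (n : Fin r → ℕ), (∀ i, 1 ≤ n i) →
        (μ ᵥ* obsProdD P E s n) ⬝ᵥ (fun _ => (1 : ℝ)) =
          (μ ᵥ* obsProdD P E (s ∘ Fin.rev) (n ∘ Fin.rev)) ⬝ᵥ (fun _ => (1 : ℝ)))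
      ↔ (∀ (r : ℕ), 1 ≤ r → ∀ n : Fin r → ℕ, (∀ i, 1 ≤ n i) →
          (μ ᵥ* (Matrix.diagonal φ *
              (List.ofFn fun i : Fin r => P ^ n i * Matrix.diagonal φ).prod))
            ⬝ᵥ (fun _ => (1 : ℝ)) =
          (μ ᵥ* (Matrix.diagonal φ *
              (List.ofFn fun i : Fin r =>
                P ^ (n ∘ Fin.rev) i * Matrix.diagonal φ).prod))
            ⬝ᵥ (fun _ => (1 : ℝ))) :=
  reversible_iff_single_symbol_general P μ E φ hP1 hpos hstat hφ hcomb
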